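/- Fix β ∈ ℝ, t > 0, s' ∈ (0,t], a bounded measurable curve P : [0,s'] → ℝ³, a vector n ∈ ℝ³, and a number c < 0. Consider the problem of minimizing J(ω) = ½ ∫₀^{s'} e^{β(t−σ)} |ω(σ)|² dσ over ω ∈ L²([0,s'];ℝ³) subject to the linear constraint ⟨ n , ∫₀^{s'} ω(σ) × (P(s') − P(σ)) dσ ⟩ + c = 0. Assume the quantity I := ∫₀^{s'} e^{−β(t−σ)} ( |n|² |P(s') − P(σ)|² − ⟨ n , P(s') − P(σ) ⟩² ) dσ is strictly positive. Then the problem admits a unique minimizer, given by ω(σ) = λ e^{−β(t−σ)} n × (P(s') − P(σ)) with λ = c / I, and λ ≤ 0. -/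

import Mathlib

open MeasureTheory Set Classical
noncomputable section

/-- Three-dimensional Euclidean space. -/
abbrev E3 : Type := EuclideanSpace ℝ (Fin 3)

/-- The cross product on `ℝ³`. -/
def cross (u v : E3) : E3 :=
  WithLp.toLp 2 ![u 1 * v 2 - u 2 * v 1, u 2 * v 0 - u 0 * v 2, u 0 * v 1 - u 1 * v 0]

/-- The Euclidean inner product on `ℝ³`. -/
def rinner (u v : E3) : ℝ := inner ℝ u v

/-- The signed distance to the boundary of `Ω`: negative inside `Ω`, positive outside. -/
def signedDistFn (Ω : Set E3) (x : E3) : ℝ :=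
  if x ∈ Ω then -(Metric.infDist x (frontier Ω)) else Metric.infDist x (frontier Ω)

/-- The (unit) outer normal to `Ω`, i.e. the gradient of the signed distance. -/
def outerNormal (Ω : Set E3) (x : E3) : E3 := gradient (signedDistFn Ω) x

/-- The set `Ω` has boundary of class `C^k`: near every boundary point, `Ω` is the sublevel
set of a `C^k` defining function with nonvanishing gradient. -/
def HasCkBoundary (Ω : Set E3) (k : ℕ∞) : Prop :=
  ∀ x ∈ frontier Ω, ∃ (U : Set E3) (f : E3 → ℝ), IsOpen U ∧ x ∈ U ∧
    ContDiffOn ℝ k f U ∧ (∀ y ∈ U, gradient f y ≠ 0) ∧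
    Ω ∩ U = {y ∈ U | f y < 0} ∧ frontier Ω ∩ U = {y ∈ U | f y = 0}

/-- `γ`, together with its derivative `γd` and second derivative `γdd`, is a curve of Sobolev
class `H²` on `[0,T]`: `γ` and `γd` are absolutely continuous with the stated derivatives,
and `γdd` is square integrable. -/
def IsH2Curve (T : ℝ) (γ γd γdd : ℝ → E3) : Prop :=
  (∀ s ∈ Icc (0:ℝ) T, γ s = γ 0 + ∫ σ in (0:ℝ)..s, γd σ) ∧
  (∀ s ∈ Icc (0:ℝ) T, γd s = γd 0 + ∫ σ in (0:ℝ)..s, γdd σ) ∧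
  MemLp γdd 2 (volume.restrict (Icc (0:ℝ) T))

/-- The `L²` norm of `ω` on `[0,T]`. -/
def L2norm (T : ℝ) (ω : ℝ → E3) : ℝ := Real.sqrt (∫ s in (0:ℝ)..T, ‖ω s‖ ^ 2)

/-- The `H²` norm of a curve on `[0,T]` (given together with its two derivatives). -/
def H2norm (T : ℝ) (v vd vdd : ℝ → E3) : ℝ :=
  Real.sqrt ((∫ s in (0:ℝ)..T, ‖v s‖ ^ 2) + (∫ s in (0:ℝ)..T, ‖vd s‖ ^ 2) +
    (∫ s in (0:ℝ)..T, ‖vdd s‖ ^ 2))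

/-- Membership in the tube `V_ρ` around the (extended) initial curve `γ₀`:
`γ(0) = 0`, `γ'(0) = γ₀'(0)`, `|γ'| ≡ 1` on `[0,T]`, and `∫₀^T |γ'' − γ₀''|² ≤ ρ`. -/
def InTube (T ρ : ℝ) (γ₀d0 : E3) (γ₀dd : ℝ → E3) (γ γd γdd : ℝ → E3) : Prop :=
  IsH2Curve T γ γd γdd ∧ γ 0 = 0 ∧ γd 0 = γ₀d0 ∧
  (∀ s ∈ Icc (0:ℝ) T, ‖γd s‖ = 1) ∧
  (∫ s in (0:ℝ)..T, ‖γdd s - γ₀dd s‖ ^ 2) ≤ ρ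

/-- The second derivative of the curve `γ₀` extended linearly beyond `t₀`. -/
def extendSecond (t₀ : ℝ) (γ₀dd : ℝ → E3) : ℝ → E3 :=
  fun s => if s ≤ t₀ then γ₀dd s else 0

/-- The rotated curve `γ_ω(s) = γ(s) + ∫₀^s ω(σ) × (γ(s) − γ(σ)) dσ`. -/
def rotCurve (γ ω : ℝ → E3) (s : ℝ) : E3 :=
  γ s + ∫ σ in (0:ℝ)..s, cross (ω σ) (γ s - γ σ)

/-- The elastic cost `J(ω) = ∫₀^T e^{β(t−s)} |ω(s)|² ds`. -/
def Jcost (β t T : ℝ) (ω : ℝ → E3) : ℝ :=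
  ∫ s in (0:ℝ)..T, Real.exp (β * (t - s)) * ‖ω s‖ ^ 2

/-- The maximal depth `E(t,γ,Ω)` at which `γ|_{[0,t]}` penetrates inside `Ω` (zero if it
does not enter `Ω`). -/
def penDepth (t : ℝ) (γ : ℝ → E3) (Ω : Set E3) : ℝ :=
  sSup (insert 0 {d | ∃ s ∈ Icc (0:ℝ) t, γ s ∈ Ω ∧ d = Metric.infDist (γ s) (frontier Ω)})

/-- The breakdown configuration (B): the tip touches the obstacle perpendicularly, and the
curve is straight (a.e.) wherever it does not touch the boundary. -/
def Breakdown (Ω : Set E3) (t₀ : ℝ) (γ γd γdd : ℝ → E3) : Prop :=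
  γ t₀ ∈ frontier Ω ∧ γd t₀ = - outerNormal Ω (γ t₀) ∧
  (∀ᵐ s : ℝ, s ∈ Ioo (0:ℝ) t₀ → γ s ∉ frontier Ω → γdd s = 0)

/-- The linear map `v ↦ w × v`. -/
def crossLM (w : E3) : E3 →ₗ[ℝ] E3 where
  toFun v := cross w v
  map_add' a b := by
    ext i
    fin_cases i <;> simp [cross, PiLp.add_apply] <;> ring
  map_smul' c a := by
    ext i
    fin_cases i <;> simp [cross, PiLp.smul_apply, smul_eq_mul] <;> ring

/-- The continuous linear map `A(w) : v ↦ w × v`. -/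
def crossCLM (w : E3) : E3 →L[ℝ] E3 := LinearMap.toContinuousLinearMap (crossLM w)

/-- The rotation `R[w] = exp(A(w))`, where `A(w)v = w × v`. -/
def rotOf (w : E3) : E3 →L[ℝ] E3 := NormedSpace.exp (crossCLM w)

/-! By the scalar triple product, `⟪n, ∫ ω × v⟫ = -∫ ⟪ω, n × v⟫` with `v σ = P s' - P σ`, so the
constraint is the linear condition `∫ ⟪ω, g⟫ = c` for `g = n × v`. For the weighted inner product
`∫ W ⟪·, ·⟫` with `W σ = e^{β(t-σ)}` this functional is represented by `W⁻¹ • g`, and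
`ω̄ = (c / I) • W⁻¹ • g` gives `∫ W ⟪ω, ω̄⟫ = (c / I) * c` for every admissible `ω`, `ω̄` included
(here `I = ∫ W⁻¹ ‖g‖²` by Lagrange's identity). So `ω - ω̄` is orthogonal to `ω̄`, and the
Pythagorean identity `J ω = J (ω - ω̄) + J ω̄` gives both minimality and uniqueness. -/

open scoped InnerProductSpace ENNReal

lemma continuous_cross : Continuous fun p : E3 × E3 => cross p.1 p.2 := by
  unfold cross; fun_prop

lemma inner_cross_eq_neg_inner_cross (n w v : E3) : ⟪n, cross w v⟫_ℝ = -⟪w, cross n v⟫_ℝ := by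
  simp only [cross, PiLp.inner_apply, RCLike.inner_apply, Real.ringHom_apply, Fin.sum_univ_three,
    Matrix.cons_val_zero, Matrix.cons_val_one, Matrix.cons_val]
  ring

lemma norm_cross_sq (u v : E3) : ‖cross u v‖ ^ 2 = ‖u‖ ^ 2 * ‖v‖ ^ 2 - ⟪u, v⟫_ℝ ^ 2 := by
  simp only [cross, EuclideanSpace.real_norm_sq_eq, Fin.sum_univ_three, Matrix.cons_val_zero,
    Matrix.cons_val_one, Matrix.cons_val, PiLp.inner_apply, RCLike.inner_apply, Real.ringHom_apply]
  ring

lemma norm_cross_le (u v : E3) : ‖cross u v‖ ≤ ‖u‖ * ‖v‖ := by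
  refine le_of_sq_le_sq ?_ (by positivity)
  rw [norm_cross_sq, mul_pow]
  nlinarith [sq_nonneg ⟪u, v⟫_ℝ]

section CrossIntegral

variable {α : Type*} [MeasurableSpace α] {μ : Measure α}

theorem inner_integral_cross {ω v : α → E3} {C : ℝ} (hω : Integrable ω μ)
    (hv : AEStronglyMeasurable v μ) (hvC : ∀ᵐ x ∂μ, ‖v x‖ ≤ C) (n : E3) :
    ⟪n, ∫ x, cross (ω x) (v x) ∂μ⟫_ℝ = -∫ x, ⟪ω x, cross n (v x)⟫_ℝ ∂μ := by
  have hint : Integrable (fun x => cross (ω x) (v x)) μ := by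
    refine (hω.norm.mul_const C).mono' (continuous_cross.comp_aestronglyMeasurable
      (hω.1.prodMk hv)) ?_
    filter_upwards [hvC] with x hx
    exact (norm_cross_le _ _).trans (mul_le_mul_of_nonneg_left hx (norm_nonneg _))
  rw [← integral_inner hint, ← integral_neg]
  exact integral_congr_ae (ae_of_all _ fun x => inner_cross_eq_neg_inner_cross _ _ _)

theorem memLp_top_cross {v : α → E3} {C : ℝ}
    (hv : AEStronglyMeasurable v μ) (hvC : ∀ᵐ x ∂μ, ‖v x‖ ≤ C) (n : E3) :
    MemLp (fun x => cross n (v x)) ∞ μ :=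
  memLp_top_of_bound ((crossCLM n).continuous.comp_aestronglyMeasurable hv) (‖n‖ * C) <|
    hvC.mono fun _ hx => (norm_cross_le _ _).trans (mul_le_mul_of_nonneg_left hx (norm_nonneg n))

end CrossIntegral

theorem ContinuousOn.memLp_top_restrict_of_isCompact {X E : Type*} [TopologicalSpace X]
    [MeasurableSpace X] [OpensMeasurableSpace X] [NormedAddCommGroup E] {μ : Measure X}
    {f : X → E} {s : Set X} (hf : ContinuousOn f s) (hs : IsCompact s) (hsm : MeasurableSet s) :
    MemLp f ∞ (μ.restrict s) := by
  obtain ⟨C, hC⟩ := hs.exists_bound_of_continuousOn hf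
  exact memLp_top_of_bound (hf.aestronglyMeasurable_of_isCompact hs hsm) C
    (ae_restrict_of_forall_mem hsm hC)

namespace MeasureTheory

variable {α F : Type*} [MeasurableSpace α] {μ : Measure α}
  [NormedAddCommGroup F] [InnerProductSpace ℝ F]

theorem MemLp.integrable_inner {f g : α → F} (hf : MemLp f 2 μ) (hg : MemLp g 2 μ) :
    Integrable (fun x => ⟪f x, g x⟫_ℝ) μ :=
  (L2.integrable_inner (𝕜 := ℝ) (hf.toLp f) (hg.toLp g)).congr <| by
    filter_upwards [hf.coeFn_toLp, hg.coeFn_toLp] with x hfx hgx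
    rw [hfx, hgx]

section Weighted

variable {W : α → ℝ}

theorem integrable_weight_mul_inner (hW : MemLp W ∞ μ) {f g : α → F} (hf : MemLp f 2 μ)
    (hg : MemLp g 2 μ) : Integrable (fun x => W x * ⟪f x, g x⟫_ℝ) μ := by
  simpa only [Pi.smul_apply', real_inner_smul_left] using (hf.smul hW).integrable_inner hg

theorem integral_weight_mul_norm_sq_eq_add (hW : MemLp W ∞ μ) {f g : α → F} (hf : MemLp f 2 μ)
    (hg : MemLp g 2 μ) (horth : ∫ x, W x * ⟪f x, g x⟫_ℝ ∂μ = ∫ x, W x * ⟪g x, g x⟫_ℝ ∂μ) :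
    ∫ x, W x * ‖f x‖ ^ 2 ∂μ = ∫ x, W x * ‖f x - g x‖ ^ 2 ∂μ + ∫ x, W x * ‖g x‖ ^ 2 ∂μ := by
  have hff := integrable_weight_mul_inner hW hf hf
  have hfg := integrable_weight_mul_inner hW hf hg
  have hgg := integrable_weight_mul_inner hW hg hg
  have hexpand : ∀ x, W x * ‖f x - g x‖ ^ 2 =
      W x * ⟪f x, f x⟫_ℝ - 2 * (W x * ⟪f x, g x⟫_ℝ) + W x * ⟪g x, g x⟫_ℝ := fun x => by
    rw [← real_inner_self_eq_norm_sq, real_inner_sub_sub_self]; ring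
  simp_rw [hexpand, ← real_inner_self_eq_norm_sq]
  rw [integral_add _ hgg, integral_sub hff (hfg.const_mul 2), integral_const_mul, horth]
  · ring
  · exact hff.sub (hfg.const_mul 2)

theorem ae_eq_of_integral_weight_mul_norm_sub_sq_eq_zero (hWpos : ∀ᵐ x ∂μ, 0 < W x)
    (hW : MemLp W ∞ μ) {f g : α → F} (hf : MemLp f 2 μ) (hg : MemLp g 2 μ)
    (h : ∫ x, W x * ‖f x - g x‖ ^ 2 ∂μ = 0) : f =ᵐ[μ] g := by
  have hint := integrable_weight_mul_inner hW (hf.sub hg) (hf.sub hg)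
  simp only [Pi.sub_apply, real_inner_self_eq_norm_sq] at hint
  have hzero := (integral_eq_zero_iff_of_nonneg_ae
    (hWpos.mono fun x hx => by positivity) hint).mp h
  filter_upwards [hzero, hWpos] with x hx hWx
  simpa [hWx.ne', sub_eq_zero] using hx

variable (μ) in
/-- The minimiser of `∫ W ‖ω‖² dμ` under `∫ ⟪ω, g⟫ dμ = c`: `W⁻¹ • g` represents the constraint
functional for the inner product `∫ W ⟪·, ·⟫ dμ`, and is scaled to meet the constraint. -/
def minNormSolution (W : α → ℝ) (g : α → F) (c : ℝ) : α → F :=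
  fun x => (c / ∫ y, (W y)⁻¹ * ‖g y‖ ^ 2 ∂μ) • ((W x)⁻¹ • g x)

theorem memLp_minNormSolution {g : α → F} (c : ℝ)
    (hWg : MemLp (fun x => (W x)⁻¹ • g x) 2 μ) :
    MemLp (minNormSolution μ W g c) 2 μ :=
  hWg.const_smul _

theorem integral_inner_minNormSolution {g : α → F} (c : ℝ)
    (hI : ∫ x, (W x)⁻¹ * ‖g x‖ ^ 2 ∂μ ≠ 0) :
    ∫ x, ⟪minNormSolution μ W g c x, g x⟫_ℝ ∂μ = c := by
  simp only [minNormSolution, real_inner_smul_left, real_inner_self_eq_norm_sq]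
  rw [integral_const_mul, div_mul_cancel₀ c hI]

theorem integral_weight_mul_inner_minNormSolution (hWne : ∀ᵐ x ∂μ, W x ≠ 0) (g ω : α → F)
    (c : ℝ) : ∫ x, W x * ⟪ω x, minNormSolution μ W g c x⟫_ℝ ∂μ =
      (c / ∫ x, (W x)⁻¹ * ‖g x‖ ^ 2 ∂μ) * ∫ x, ⟪ω x, g x⟫_ℝ ∂μ := by
  rw [← integral_const_mul]
  refine integral_congr_ae (hWne.mono fun x hx => ?_)
  simp only [minNormSolution, real_inner_smul_right]
  field_simp

theorem integral_weight_mul_norm_sq_eq_add_minNormSolution (hW : MemLp W ∞ μ)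
    (hWne : ∀ᵐ x ∂μ, W x ≠ 0) {g ω : α → F} {c : ℝ}
    (hWg : MemLp (fun x => (W x)⁻¹ • g x) 2 μ) (hI : ∫ x, (W x)⁻¹ * ‖g x‖ ^ 2 ∂μ ≠ 0)
    (hω : MemLp ω 2 μ) (hωc : ∫ x, ⟪ω x, g x⟫_ℝ ∂μ = c) :
    ∫ x, W x * ‖ω x‖ ^ 2 ∂μ = ∫ x, W x * ‖ω x - minNormSolution μ W g c x‖ ^ 2 ∂μ +
      ∫ x, W x * ‖minNormSolution μ W g c x‖ ^ 2 ∂μ :=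
  integral_weight_mul_norm_sq_eq_add hW hω (memLp_minNormSolution c hWg) <| by
    rw [integral_weight_mul_inner_minNormSolution hWne,
      integral_weight_mul_inner_minNormSolution hWne, hωc, integral_inner_minNormSolution c hI]

theorem integral_weight_mul_norm_sq_minNormSolution_le (hW : MemLp W ∞ μ)
    (hWpos : ∀ᵐ x ∂μ, 0 < W x) {g ω : α → F} {c : ℝ}
    (hWg : MemLp (fun x => (W x)⁻¹ • g x) 2 μ) (hI : ∫ x, (W x)⁻¹ * ‖g x‖ ^ 2 ∂μ ≠ 0)
    (hω : MemLp ω 2 μ) (hωc : ∫ x, ⟪ω x, g x⟫_ℝ ∂μ = c) :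
    ∫ x, W x * ‖minNormSolution μ W g c x‖ ^ 2 ∂μ ≤ ∫ x, W x * ‖ω x‖ ^ 2 ∂μ := by
  rw [integral_weight_mul_norm_sq_eq_add_minNormSolution hW (hWpos.mono fun _ h => h.ne') hWg
    hI hω hωc]
  exact le_add_of_nonneg_left (integral_nonneg_of_ae (hWpos.mono fun x hx => by positivity))

theorem ae_eq_minNormSolution_of_integral_eq (hW : MemLp W ∞ μ)
    (hWpos : ∀ᵐ x ∂μ, 0 < W x) {g ω : α → F} {c : ℝ}
    (hWg : MemLp (fun x => (W x)⁻¹ • g x) 2 μ) (hI : ∫ x, (W x)⁻¹ * ‖g x‖ ^ 2 ∂μ ≠ 0)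
    (hω : MemLp ω 2 μ) (hωc : ∫ x, ⟪ω x, g x⟫_ℝ ∂μ = c)
    (heq : ∫ x, W x * ‖ω x‖ ^ 2 ∂μ = ∫ x, W x * ‖minNormSolution μ W g c x‖ ^ 2 ∂μ) :
    ω =ᵐ[μ] minNormSolution μ W g c := by
  refine ae_eq_of_integral_weight_mul_norm_sub_sq_eq_zero hWpos hW hω
    (memLp_minNormSolution c hWg) ?_
  have := integral_weight_mul_norm_sq_eq_add_minNormSolution hW (hWpos.mono fun _ h => h.ne')
    hWg hI hω hωc
  linarith

end Weighted

end MeasureTheory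

theorem single_point_pushout_minimizer_general
    (β t s' : ℝ) (hs' : s' ∈ Ioc (0:ℝ) t)
    (P : ℝ → E3) (hPm : Measurable P) (hPb : ∃ C : ℝ, ∀ σ ∈ Icc (0:ℝ) s', ‖P σ‖ ≤ C)
    (n : E3) (c : ℝ) (hc : c < 0)
    (I : ℝ)
    (hI : I = ∫ σ in (0:ℝ)..s', Real.exp (-(β * (t - σ))) *
        (‖n‖ ^ 2 * ‖P s' - P σ‖ ^ 2 - (rinner n (P s' - P σ)) ^ 2))
    (hIpos : 0 < I) :
    ∃ wbar : ℝ → E3,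
      (∀ σ : ℝ, wbar σ = (c / I) • (Real.exp (-(β * (t - σ))) • cross n (P s' - P σ))) ∧
      c / I ≤ 0 ∧
      MemLp wbar 2 (volume.restrict (Icc (0:ℝ) s')) ∧
      rinner n (∫ σ in (0:ℝ)..s', cross (wbar σ) (P s' - P σ)) + c = 0 ∧
      (∀ ω : ℝ → E3, MemLp ω 2 (volume.restrict (Icc (0:ℝ) s')) →
        rinner n (∫ σ in (0:ℝ)..s', cross (ω σ) (P s' - P σ)) + c = 0 →
        (1/2) * (∫ σ in (0:ℝ)..s', Real.exp (β * (t - σ)) * ‖wbar σ‖ ^ 2) ≤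
          (1/2) * (∫ σ in (0:ℝ)..s', Real.exp (β * (t - σ)) * ‖ω σ‖ ^ 2)) ∧
      (∀ ω : ℝ → E3, MemLp ω 2 (volume.restrict (Icc (0:ℝ) s')) →
        rinner n (∫ σ in (0:ℝ)..s', cross (ω σ) (P s' - P σ)) + c = 0 →
        (∫ σ in (0:ℝ)..s', Real.exp (β * (t - σ)) * ‖ω σ‖ ^ 2) =
          (∫ σ in (0:ℝ)..s', Real.exp (β * (t - σ)) * ‖wbar σ‖ ^ 2) →
        ω =ᵐ[volume.restrict (Icc (0:ℝ) s')] wbar) := by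
  obtain ⟨C, hC⟩ := hPb
  simp only [intervalIntegral.integral_of_le hs'.1.le, ← integral_Icc_eq_integral_Ioc,
    rinner] at hI ⊢
  set μ := volume.restrict (Icc (0:ℝ) s')
  set W : ℝ → ℝ := fun σ => Real.exp (β * (t - σ))
  set g : ℝ → E3 := fun σ => cross n (P s' - P σ)
  have hW_inv (σ : ℝ) : (W σ)⁻¹ = Real.exp (-(β * (t - σ))) := (Real.exp_neg _).symm
  have hWpos : ∀ᵐ σ ∂μ, 0 < W σ := ae_of_all _ fun σ => Real.exp_pos _
  have hμ_top {f : ℝ → ℝ} (hf : Continuous f) : MemLp f ∞ μ :=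
    hf.continuousOn.memLp_top_restrict_of_isCompact isCompact_Icc measurableSet_Icc
  have hW : MemLp W ∞ μ := hμ_top (by fun_prop)
  have hv : ∀ᵐ σ ∂μ, ‖P s' - P σ‖ ≤ ‖P s'‖ + C :=
    ae_restrict_of_forall_mem measurableSet_Icc fun σ hσ =>
      (norm_sub_le _ _).trans (add_le_add le_rfl (hC σ hσ))
  have hWg : MemLp (fun σ => (W σ)⁻¹ • g σ) 2 μ :=
    ((memLp_top_cross (measurable_const.sub hPm).aestronglyMeasurable hv n).smul
      (hμ_top (by simp_rw [hW_inv]; fun_prop))).mono_exponent le_top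
  have hI' : ∫ σ, (W σ)⁻¹ * ‖g σ‖ ^ 2 ∂μ = I := by
    simp_rw [hW_inv, g, norm_cross_sq]
    exact hI.symm
  have hI0 : ∫ σ, (W σ)⁻¹ * ‖g σ‖ ^ 2 ∂μ ≠ 0 := hI' ▸ hIpos.ne'
  have hconstraint (ω : ℝ → E3) (hω : MemLp ω 2 μ) :
      ⟪n, ∫ σ, cross (ω σ) (P s' - P σ) ∂μ⟫_ℝ + c = 0 ↔ ∫ σ, ⟪ω σ, g σ⟫_ℝ ∂μ = c := by
    rw [inner_integral_cross (v := fun σ => P s' - P σ) (hω.integrable one_le_two)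
      (measurable_const.sub hPm).aestronglyMeasurable hv, neg_add_eq_zero, eq_comm]
  refine ⟨minNormSolution μ W g c, fun σ => by rw [minNormSolution, hI', hW_inv],
    div_nonpos_of_nonpos_of_nonneg hc.le hIpos.le, memLp_minNormSolution c hWg,
    (hconstraint _ (memLp_minNormSolution c hWg)).2 (integral_inner_minNormSolution c hI0),
    fun ω hω hωc => ?_, fun ω hω hωc heq => ?_⟩
  · exact mul_le_mul_of_nonneg_left (integral_weight_mul_norm_sq_minNormSolution_le hW hWpos
      hWg hI0 hω ((hconstraint ω hω).1 hωc)) (by norm_num)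
  · exact ae_eq_minNormSolution_of_integral_eq hW hWpos hWg hI0 hω ((hconstraint ω hω).1 hωc) heq

/-- explicit solution of the single-point elastic minimization problem: the unique
minimizer of `½∫ e^{β(t−σ)}|ω|²` under the linearized non-penetration constraint is
`ω(σ) = λ e^{−β(t−σ)} n × (P(s') − P(σ))` with `λ = c / I ≤ 0`. -/
theorem single_point_pushout_minimizer
    (β t s' : ℝ) (ht : 0 < t) (hs' : s' ∈ Ioc (0:ℝ) t)
    (P : ℝ → E3) (hPm : Measurable P) (hPb : ∃ C : ℝ, ∀ σ ∈ Icc (0:ℝ) s', ‖P σ‖ ≤ C)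
    (n : E3) (c : ℝ) (hc : c < 0)
    (I : ℝ)
    (hI : I = ∫ σ in (0:ℝ)..s', Real.exp (-(β * (t - σ))) *
        (‖n‖ ^ 2 * ‖P s' - P σ‖ ^ 2 - (rinner n (P s' - P σ)) ^ 2))
    (hIpos : 0 < I) :
    ∃ wbar : ℝ → E3,
      (∀ σ : ℝ, wbar σ = (c / I) • (Real.exp (-(β * (t - σ))) • cross n (P s' - P σ))) ∧
      c / I ≤ 0 ∧
      MemLp wbar 2 (volume.restrict (Icc (0:ℝ) s')) ∧
      rinner n (∫ σ in (0:ℝ)..s', cross (wbar σ) (P s' - P σ)) + c = 0 ∧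
      (∀ ω : ℝ → E3, MemLp ω 2 (volume.restrict (Icc (0:ℝ) s')) →
        rinner n (∫ σ in (0:ℝ)..s', cross (ω σ) (P s' - P σ)) + c = 0 →
        (1/2) * (∫ σ in (0:ℝ)..s', Real.exp (β * (t - σ)) * ‖wbar σ‖ ^ 2) ≤
          (1/2) * (∫ σ in (0:ℝ)..s', Real.exp (β * (t - σ)) * ‖ω σ‖ ^ 2)) ∧
      (∀ ω : ℝ → E3, MemLp ω 2 (volume.restrict (Icc (0:ℝ) s')) →
        rinner n (∫ σ in (0:ℝ)..s', cross (ω σ) (P s' - P σ)) + c = 0 →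
        (∫ σ in (0:ℝ)..s', Real.exp (β * (t - σ)) * ‖ω σ‖ ^ 2) =
          (∫ σ in (0:ℝ)..s', Real.exp (β * (t - σ)) * ‖wbar σ‖ ^ 2) →
        ω =ᵐ[volume.restrict (Icc (0:ℝ) s')] wbar) :=
  single_point_pushout_minimizer_general β t s' hs' P hPm hPb n c hc I hI hIpos
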